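/- Fix a₁, a₂, c ∈ ℝ and let 𝔪_c = {(x, y, z, c·x − c²·y + c³·z) : x, y, z ∈ ℝ³} ⊆ 𝔤(a₁, a₂). Then 𝔪_c is closed under the bracket of 𝔤(a₁, a₂) if and only if c⁴ = a₁ c² + a₂. -/

import Mathlib

/-!
Put `w = c x - c² y + c³ z`. The bracket is assembled from cross products, which are bilinear,
so for two elements of `𝔪_c` the failure of closure is a formal expression in the products
`p₁ × q₂` with `p, q ∈ {x, y, z}`, and every coefficient turns out to be a multiple of
`a₂ + a₁ c² - c⁴`. Hence closure holds when this scalar vanishes; conversely, for `y₁ = e₁`,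
`y₂ = e₂` and all other entries zero the defect is `(a₂ + a₁ c² - c⁴) e₃`.
-/

open Matrix

/-- The cross product on `ℝ³`. -/
def cross (x y : Fin 3 → ℝ) : Fin 3 → ℝ :=
  ![x 1 * y 2 - x 2 * y 1, x 2 * y 0 - x 0 * y 2, x 0 * y 1 - x 1 * y 0]

abbrev V3 := Fin 3 → ℝ

/-- The underlying space `ℝ³ × ℝ³ × ℝ³ × ℝ³` of `𝔤(a₁, a₂)`. -/
abbrev G4 := V3 × V3 × V3 × V3

/-- The bracket of `𝔤(a₁, a₂)`, the Lie algebra of the isometry group of the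
sub-Riemannian model space `𝖢₃,₃(a₁,a₂)`. -/
def gBracket (a₁ a₂ : ℝ) (u v : G4) : G4 :=
  let x₁ := u.1; let y₁ := u.2.1; let z₁ := u.2.2.1; let w₁ := u.2.2.2
  let x₂ := v.1; let y₂ := v.2.1; let z₂ := v.2.2.1; let w₂ := v.2.2.2
  ( cross w₁ x₂ + cross x₁ w₂ + a₂ • (cross y₁ z₂ + cross z₁ y₂),
    cross w₁ y₂ + cross y₁ w₂ + cross x₁ x₂
      + a₁ • (cross x₁ z₂ + cross z₁ x₂ + cross y₁ y₂ + a₁ • cross z₁ z₂)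
      + a₂ • cross z₁ z₂,
    cross w₁ z₂ + cross z₁ w₂ + cross x₁ y₂ + cross y₁ x₂ + a₁ • (cross y₁ z₂ + cross z₁ y₂),
    cross w₁ w₂ + a₂ • (cross x₁ z₂ + cross z₁ x₂ + cross y₁ y₂ + a₁ • cross z₁ z₂) )

theorem cross_eq_crossProduct (x y : V3) : cross x y = x ⨯₃ y := rfl

def mLift (c : ℝ) (x y z : V3) : G4 := (x, y, z, c • x - c ^ 2 • y + c ^ 3 • z)

def mDefect (c : ℝ) (u : G4) : V3 := u.2.2.2 - (c • u.1 - c ^ 2 • u.2.1 + c ^ 3 • u.2.2.1)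

theorem mDefect_gBracket_mLift (a₁ a₂ c : ℝ) (x₁ y₁ z₁ x₂ y₂ z₂ : V3) :
    mDefect c (gBracket a₁ a₂ (mLift c x₁ y₁ z₁) (mLift c x₂ y₂ z₂)) =
      (a₂ + a₁ * c ^ 2 - c ^ 4) • (x₁ ⨯₃ z₂ + z₁ ⨯₃ x₂ + y₁ ⨯₃ y₂ + (c ^ 2 + a₁) • z₁ ⨯₃ z₂
        - c • (y₁ ⨯₃ z₂ + z₁ ⨯₃ y₂)) := by
  simp only [mDefect, gBracket, mLift, cross_eq_crossProduct, map_add, map_sub, map_smul,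
    LinearMap.add_apply, LinearMap.sub_apply, LinearMap.smul_apply]
  module

theorem mDefect_eq_zero_iff (c : ℝ) (u : G4) :
    mDefect c u = 0 ↔ u.2.2.2 = c • u.1 - c ^ 2 • u.2.1 + c ^ 3 • u.2.2.1 :=
  sub_eq_zero

theorem eq_mLift_of_mDefect_eq_zero {c : ℝ} {u : G4} (hu : mDefect c u = 0) :
    u = mLift c u.1 u.2.1 u.2.2.1 := by
  rw [mDefect, sub_eq_zero] at hu
  simp only [mLift, ← hu]

/-- The subspace `𝔪_c = {(x, y, z, c·x − c²·y + c³·z)}` of `𝔤(a₁,a₂)` is closed under the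
bracket if and only if `c⁴ = a₁ c² + a₂`. -/
theorem stmt_8 (a₁ a₂ c : ℝ) :
    (∀ u v : G4,
        u.2.2.2 = c • u.1 - c ^ 2 • u.2.1 + c ^ 3 • u.2.2.1 →
        v.2.2.2 = c • v.1 - c ^ 2 • v.2.1 + c ^ 3 • v.2.2.1 →
        (gBracket a₁ a₂ u v).2.2.2 =
          c • (gBracket a₁ a₂ u v).1 - c ^ 2 • (gBracket a₁ a₂ u v).2.1
            + c ^ 3 • (gBracket a₁ a₂ u v).2.2.1)
    ↔ c ^ 4 = a₁ * c ^ 2 + a₂ := by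
  simp only [← mDefect_eq_zero_iff]
  constructor
  · intro hclosed
    have h := hclosed (mLift c 0 ![1, 0, 0] 0) (mLift c 0 ![0, 1, 0] 0)
      (sub_eq_zero.2 rfl) (sub_eq_zero.2 rfl)
    rw [mDefect_gBracket_mLift] at h
    have hk : a₂ + a₁ * c ^ 2 - c ^ 4 = 0 := by simpa [cross_apply] using congrFun h 2
    linarith
  · intro h u v hu hv
    rw [eq_mLift_of_mDefect_eq_zero hu, eq_mLift_of_mDefect_eq_zero hv, mDefect_gBracket_mLift,
      show a₂ + a₁ * c ^ 2 - c ^ 4 = 0 by linarith, zero_smul]
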